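/- Let u ∈ Hˢ(ℝ^N) and a ∈ ℝ. Then the Gagliardo seminorm does not increase under polarization: ∬_{ℝ^N×ℝ^N}|u(x)-u(y)|²/|x-y|^{N+2s} dxdy ≥ ∬_{ℝ^N×ℝ^N}|(P_a u)(x)-(P_a u)(y)|²/|x-y|^{N+2s} dxdy; in particular P_a u ∈ Hˢ(ℝ^N). -/

import Mathlib

/-!
Let `σ` be the reflection in `{x₁ = a}`. It is an isometry, hence preserves Lebesgue measure, so
the Gagliardo energy is a quarter of the double integral of the integrand summed over the four
points `(x, y), (x, σy), (σx, y), (σx, σy)`, and we may take `x, y` in `{x₁ ≥ a}`, where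
`|x - y| ≤ |x - σy|`. With `A = u x, B = u σx, C = u y, D = u σy` that sum is
`k₁ ((A - C)² + (B - D)²) + k₂ ((A - D)² + (B - C)²)` with `k₁ ≥ k₂`, and polarization sorts
both pairs `(A, B)`, `(C, D)` increasingly. The sum of all four squares does not depend on the
order within the pairs, and sorting both pairs the same way can only decrease the `k₁`-part.
-/

open MeasureTheory

/-- Reflection of `x` across the hyperplane `{x₁ = a}`. -/
noncomputable def reflA {N : ℕ} [NeZero N] (a : ℝ) (x : EuclideanSpace ℝ (Fin N)) :
    EuclideanSpace ℝ (Fin N) :=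
  WithLp.toLp 2 (fun i => if i = 0 then 2 * a - x 0 else x i)

/-- Polarization of `u` with respect to the hyperplane `{x₁ = a}`. -/
noncomputable def pol {N : ℕ} [NeZero N] (a : ℝ) (u : EuclideanSpace ℝ (Fin N) → ℝ)
    (x : EuclideanSpace ℝ (Fin N)) : ℝ :=
  if a ≤ x 0 then min (u x) (u (reflA a x)) else max (u x) (u (reflA a x))

/-- The Gagliardo seminorm (squared), as an extended-real double integral. -/
noncomputable def gag (N : ℕ) (s : ℝ) (u : EuclideanSpace ℝ (Fin N) → ℝ) : ENNReal :=
  ∫⁻ x, ∫⁻ y, ENNReal.ofReal ((u x - u y) ^ 2 / ‖x - y‖ ^ ((N : ℝ) + 2 * s))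


theorem two_point_rearrangement {R : Type*} [CommRing R] [LinearOrder R] [IsStrictOrderedRing R]
    {A B C D k₁ k₂ : R} (hk : k₂ ≤ k₁) :
    k₁ * ((min A B - min C D) ^ 2 + (max A B - max C D) ^ 2)
        + k₂ * ((min A B - max C D) ^ 2 + (max A B - min C D) ^ 2)
      ≤ k₁ * ((A - C) ^ 2 + (B - D) ^ 2) + k₂ * ((A - D) ^ 2 + (B - C) ^ 2) := by
  rcases le_total A B with hAB | hAB <;> rcases le_total C D with hCD | hCD <;>
    simp only [min_eq_left, min_eq_right, max_eq_left, max_eq_right, hAB, hCD] <;>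
    nlinarith [mul_nonneg (sub_nonneg.2 hk) (mul_nonneg (sub_nonneg.2 hAB) (sub_nonneg.2 hCD))]

section OrbitSum

variable {α : Type*} (σ : α → α) (F : α → α → ENNReal)

def orbitSum (x y : α) : ENNReal :=
  F x y + F x (σ y) + (F (σ x) y + F (σ x) (σ y))

variable {σ}

theorem orbitSum_eq_of_mem_orbit (hσ : Function.Involutive σ) {x x' y y' : α}
    (hx : x' = x ∨ x' = σ x) (hy : y' = y ∨ y' = σ y) :
    orbitSum σ F x' y' = orbitSum σ F x y := by
  rcases hx with rfl | rfl <;> rcases hy with rfl | rfl <;>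
    simp only [orbitSum, hσ _] <;> ring

theorem lintegral_add_comp_eq_two_mul [MeasurableSpace α] {μ : Measure α}
    (hσ : MeasurePreserving σ μ μ) {f : α → ENNReal} (hf : Measurable f) :
    ∫⁻ x, (f x + f (σ x)) ∂μ = 2 * ∫⁻ x, f x ∂μ := by
  rw [lintegral_add_left hf, hσ.lintegral_comp hf, two_mul]

theorem lintegral_lintegral_orbitSum [MeasurableSpace α] {μ : Measure α} [SFinite μ]
    (hσ : MeasurePreserving σ μ μ) (hF : Measurable (Function.uncurry F)) :
    ∫⁻ x, ∫⁻ y, orbitSum σ F x y ∂μ ∂μ = 4 * ∫⁻ x, ∫⁻ y, F x y ∂μ ∂μ := by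
  have hFy : ∀ x, Measurable (F x) := fun x => hF.comp measurable_prodMk_left
  have hFx : Measurable fun x => ∫⁻ y, F x y ∂μ := hF.lintegral_prod_right'
  have inner : ∀ x, ∫⁻ y, orbitSum σ F x y ∂μ
      = 2 * ((∫⁻ y, F x y ∂μ) + ∫⁻ y, F (σ x) y ∂μ) := fun x => by
    have h : Measurable fun y => F x y + F x (σ y) := (hFy x).add ((hFy x).comp hσ.measurable)
    rw [mul_add, ← lintegral_add_comp_eq_two_mul hσ (hFy x),
      ← lintegral_add_comp_eq_two_mul hσ (hFy _), ← lintegral_add_left h]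
    rfl
  have hG : Measurable fun x => ∫⁻ y, F x y ∂μ + ∫⁻ y, F (σ x) y ∂μ :=
    hFx.add (hFx.comp hσ.measurable)
  rw [lintegral_congr inner, lintegral_const_mul _ hG, lintegral_add_comp_eq_two_mul hσ hFx,
    ← mul_assoc]
  norm_num

end OrbitSum

section Reflection

variable {N : ℕ} [NeZero N] (a : ℝ)

theorem reflA_apply_zero (x : EuclideanSpace ℝ (Fin N)) : reflA a x 0 = 2 * a - x 0 := by
  simp [reflA]

theorem reflA_involutive : Function.Involutive (reflA (N := N) a) := by
  intro x
  ext i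
  by_cases h : i = 0
  · subst h; simp [reflA]
  · simp [reflA, h]

theorem norm_reflA_sub_reflA (x y : EuclideanSpace ℝ (Fin N)) :
    ‖reflA a x - reflA a y‖ = ‖x - y‖ := by
  simp only [EuclideanSpace.norm_eq]
  congr 1
  refine Finset.sum_congr rfl fun i _ => ?_
  by_cases h : i = 0
  · subst h; simp [reflA, ← abs_neg (x 0 - y 0)]
  · simp [reflA, h]

theorem norm_reflA_sub (x y : EuclideanSpace ℝ (Fin N)) :
    ‖reflA a x - y‖ = ‖x - reflA a y‖ := by
  rw [← norm_reflA_sub_reflA a, reflA_involutive a]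

theorem sq_norm_sub_reflA (x y : EuclideanSpace ℝ (Fin N)) :
    ‖x - reflA a y‖ ^ 2 = ‖x - y‖ ^ 2 + 4 * (x 0 - a) * (y 0 - a) := by
  have hrest : ∀ i ∈ Finset.univ.erase (0 : Fin N), ‖(x - reflA a y) i‖ ^ 2 = ‖(x - y) i‖ ^ 2 :=
    fun i hi => by simp [reflA, Finset.ne_of_mem_erase hi]
  rw [EuclideanSpace.norm_sq_eq, EuclideanSpace.norm_sq_eq,
    ← Finset.add_sum_erase _ _ (Finset.mem_univ 0), ← Finset.add_sum_erase _ _ (Finset.mem_univ 0),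
    Finset.sum_congr rfl hrest]
  simp only [PiLp.sub_apply, reflA_apply_zero, Real.norm_eq_abs, sq_abs]
  ring

theorem norm_sub_le_norm_sub_reflA {x y : EuclideanSpace ℝ (Fin N)} (hx : a ≤ x 0)
    (hy : a ≤ y 0) : ‖x - y‖ ≤ ‖x - reflA a y‖ := by
  refine le_of_sq_le_sq ?_ (norm_nonneg _)
  rw [sq_norm_sub_reflA]
  nlinarith

theorem isometry_reflA : Isometry (reflA (N := N) a) :=
  Isometry.of_dist_eq fun x y => by simp only [dist_eq_norm, norm_reflA_sub_reflA]

theorem measurePreserving_reflA : MeasurePreserving (reflA (N := N) a) volume volume := by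
  rw [← EuclideanSpace.euclideanHausdorffMeasure_eq_volume]
  exact IsometryEquiv.measurePreserving_euclideanHausdorffMeasure
    ⟨(reflA_involutive a).toPerm, isometry_reflA a⟩ N

end Reflection

section Polarization

variable {N : ℕ} [NeZero N] (a : ℝ) (u : EuclideanSpace ℝ (Fin N) → ℝ)

theorem pol_of_le {x : EuclideanSpace ℝ (Fin N)} (h : a ≤ x 0) :
    pol a u x = min (u x) (u (reflA a x)) := if_pos h

theorem pol_reflA_of_le {x : EuclideanSpace ℝ (Fin N)} (h : a ≤ x 0) :
    pol a u (reflA a x) = max (u x) (u (reflA a x)) := by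
  rcases h.eq_or_lt with h | h
  · have hx : reflA a x = x := by
      ext i
      by_cases hi : i = 0
      · subst hi; simp [reflA, ← h]; ring
      · simp [reflA, hi]
    simp [pol, hx]
  · have h' : ¬ a ≤ reflA a x 0 := by rw [reflA_apply_zero]; linarith
    rw [pol, if_neg h', reflA_involutive a, max_comm]

theorem pol_eq_piecewise :
    pol a u = {x | a ≤ x 0}.piecewise (u ⊓ u ∘ reflA a) (u ⊔ u ∘ reflA a) := by
  ext x
  by_cases h : a ≤ x 0 <;> simp [pol, h, Set.piecewise]

theorem measurableSet_le_apply_zero : MeasurableSet {x : EuclideanSpace ℝ (Fin N) | a ≤ x 0} :=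
  measurableSet_le measurable_const (by fun_prop)

theorem measurable_pol {u : EuclideanSpace ℝ (Fin N) → ℝ} (hu : Measurable u) :
    Measurable (pol a u) := by
  have hσ := hu.comp (measurePreserving_reflA a).measurable
  rw [pol_eq_piecewise]
  exact (hu.inf hσ).piecewise (measurableSet_le_apply_zero a) (hu.sup hσ)

theorem memLp_pol {p : ENNReal} {u : EuclideanSpace ℝ (Fin N) → ℝ} (hu : MemLp u p volume) :
    MemLp (pol a u) p volume := by
  have hσ := hu.comp_measurePreserving (measurePreserving_reflA a)
  rw [pol_eq_piecewise]
  exact MemLp.piecewise (measurableSet_le_apply_zero a) ((hu.inf hσ).restrict _)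
    ((hu.sup hσ).restrict _)

theorem pol_congr_ae {u v : EuclideanSpace ℝ (Fin N) → ℝ} (h : u =ᵐ[volume] v) :
    pol a u =ᵐ[volume] pol a v := by
  filter_upwards [h, (measurePreserving_reflA a).quasiMeasurePreserving.ae_eq_comp h]
    with x hx hσx
  simp only [pol, hx, Function.comp_apply] at hσx ⊢
  rw [hσx]

end Polarization

section Gagliardo

variable {E : Type*} [NormedAddCommGroup E]

noncomputable def gagIntegrand (p : ℝ) (w : E → ℝ) (x y : E) : ENNReal :=
  ENNReal.ofReal ((w x - w y) ^ 2 / ‖x - y‖ ^ p)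

theorem measurable_gagIntegrand [MeasurableSpace E] [OpensMeasurableSpace E]
    [SecondCountableTopology E] {p : ℝ} {w : E → ℝ} (hw : Measurable w) :
    Measurable (Function.uncurry (gagIntegrand p w)) := by
  refine ENNReal.measurable_ofReal.comp (Measurable.div ?_ ?_)
  · exact ((hw.comp measurable_fst).sub (hw.comp measurable_snd)).pow_const 2
  · exact (continuous_fst.sub continuous_snd).norm.measurable.pow_const p

theorem gag_eq_lintegral_gagIntegrand (N : ℕ) (s : ℝ) (w : EuclideanSpace ℝ (Fin N) → ℝ) :
    gag N s w = ∫⁻ x, ∫⁻ y, gagIntegrand ((N : ℝ) + 2 * s) w x y := rfl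

theorem gag_congr_ae {N : ℕ} {s : ℝ} {u v : EuclideanSpace ℝ (Fin N) → ℝ}
    (h : u =ᵐ[volume] v) : gag N s u = gag N s v := by
  refine lintegral_congr_ae (h.mono fun x hx => lintegral_congr_ae (h.mono fun y hy => ?_))
  simp only [hx, hy]

variable {N : ℕ} [NeZero N] (a : ℝ)

theorem orbitSum_reflA_gagIntegrand (p : ℝ) (w : EuclideanSpace ℝ (Fin N) → ℝ)
    (x y : EuclideanSpace ℝ (Fin N)) :
    orbitSum (reflA a) (gagIntegrand p w) x y = ENNReal.ofReal
      ((‖x - y‖ ^ p)⁻¹ * ((w x - w y) ^ 2 + (w (reflA a x) - w (reflA a y)) ^ 2)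
        + (‖x - reflA a y‖ ^ p)⁻¹ * ((w x - w (reflA a y)) ^ 2 + (w (reflA a x) - w y) ^ 2)) := by
  simp only [orbitSum, gagIntegrand, norm_reflA_sub, reflA_involutive a _, div_eq_mul_inv]
  rw [← ENNReal.ofReal_add (by positivity) (by positivity),
    ← ENNReal.ofReal_add (by positivity) (by positivity),
    ← ENNReal.ofReal_add (by positivity) (by positivity)]
  congr 1
  ring

theorem exists_reflA_orbit_le_apply_zero (x : EuclideanSpace ℝ (Fin N)) :
    ∃ x', a ≤ x' 0 ∧ (x' = x ∨ x' = reflA a x) := by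
  rcases le_or_gt a (x 0) with h | h
  · exact ⟨x, h, .inl rfl⟩
  · exact ⟨reflA a x, by rw [reflA_apply_zero]; linarith, .inr rfl⟩

variable (u : EuclideanSpace ℝ (Fin N) → ℝ) {p : ℝ}

theorem orbitSum_gagIntegrand_pol_le_of_le (hp : 0 ≤ p) {x y : EuclideanSpace ℝ (Fin N)}
    (hx : a ≤ x 0) (hy : a ≤ y 0) :
    orbitSum (reflA a) (gagIntegrand p (pol a u)) x y
      ≤ orbitSum (reflA a) (gagIntegrand p u) x y := by
  rw [orbitSum_reflA_gagIntegrand, orbitSum_reflA_gagIntegrand, pol_of_le a u hx,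
    pol_of_le a u hy, pol_reflA_of_le a u hx, pol_reflA_of_le a u hy]
  refine ENNReal.ofReal_le_ofReal ?_
  rcases eq_or_ne x y with rfl | hxy
  -- `‖x - x‖ ^ p` is `0` (junk inverse), but its weight only multiplies vanishing squares.
  · simpa using two_point_rearrangement (A := u x) (B := u (reflA a x)) (C := u x)
      (D := u (reflA a x)) (le_refl (‖x - reflA a x‖ ^ p)⁻¹)
  · have hdist := norm_sub_le_norm_sub_reflA a hx hy
    exact two_point_rearrangement <| inv_anti₀ (Real.rpow_pos_of_pos (norm_sub_pos_iff.2 hxy) p)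
      (Real.rpow_le_rpow (norm_nonneg _) hdist hp)

theorem orbitSum_gagIntegrand_pol_le (hp : 0 ≤ p) (x y : EuclideanSpace ℝ (Fin N)) :
    orbitSum (reflA a) (gagIntegrand p (pol a u)) x y
      ≤ orbitSum (reflA a) (gagIntegrand p u) x y := by
  obtain ⟨x', hx', hxx'⟩ := exists_reflA_orbit_le_apply_zero a x
  obtain ⟨y', hy', hyy'⟩ := exists_reflA_orbit_le_apply_zero a y
  rw [← orbitSum_eq_of_mem_orbit _ (reflA_involutive a) hxx' hyy',
    ← orbitSum_eq_of_mem_orbit _ (reflA_involutive a) hxx' hyy']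
  exact orbitSum_gagIntegrand_pol_le_of_le a u hp hx' hy'

variable {u} {s : ℝ}

theorem gag_pol_le_of_measurable (hs : 0 ≤ (N : ℝ) + 2 * s) (hu : Measurable u) :
    gag N s (pol a u) ≤ gag N s u := by
  have h4 : 4 * gag N s (pol a u) ≤ 4 * gag N s u := by
    simp only [gag_eq_lintegral_gagIntegrand, ← lintegral_lintegral_orbitSum _
      (measurePreserving_reflA a) (measurable_gagIntegrand (measurable_pol a hu)),
      ← lintegral_lintegral_orbitSum _ (measurePreserving_reflA a) (measurable_gagIntegrand hu)]
    exact lintegral_mono fun x => lintegral_mono fun y => orbitSum_gagIntegrand_pol_le a u hs x y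
  exact (ENNReal.mul_le_mul_iff_right (by norm_num) (by norm_num)).1 h4

theorem gag_pol_le (hs : 0 ≤ (N : ℝ) + 2 * s) (hu : AEMeasurable u) :
    gag N s (pol a u) ≤ gag N s u := by
  rw [gag_congr_ae hu.ae_eq_mk, gag_congr_ae (pol_congr_ae a hu.ae_eq_mk)]
  exact gag_pol_le_of_measurable a hs hu.measurable_mk

end Gagliardo

theorem polarization_decreases_gagliardo {N : ℕ} [NeZero N] (s a : ℝ)
    (hs : s ∈ Set.Ioo (0 : ℝ) 1) (u : EuclideanSpace ℝ (Fin N) → ℝ)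
    (hu2 : MemLp u 2 volume) (hugag : gag N s u < ⊤) :
    gag N s (pol a u) ≤ gag N s u ∧
    MemLp (pol a u) 2 volume ∧ gag N s (pol a u) < ⊤ := by
  have hp : 0 ≤ (N : ℝ) + 2 * s := by linarith [hs.1, N.cast_nonneg (α := ℝ)]
  have hle : gag N s (pol a u) ≤ gag N s u :=
    gag_pol_le a hp hu2.aestronglyMeasurable.aemeasurable
  exact ⟨hle, memLp_pol a hu2, hle.trans_lt hugag⟩
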